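/- Let (M,d) be a compact metric space and A : M → M(d,ℝ) an α-Hölder map with Hölder constant C₂ > 0. Let f : M → M be a map, x, p ∈ M, n ∈ ℕ, and C₁, θ, ρ > 0 with d(fʲ(x), fʲ(p)) ≤ C₁·ρ·e^{−θ·min(j, n−j)} for every j = 0,…,n. Let λ₁ ∈ ℝ, N ≥ 1 and 0 < δ < θα, and suppose there are norms ‖·‖₀,…,‖·‖_n on ℝ^d satisfying ‖u‖ ≤ ‖u‖_j ≤ N·e^{δ·min(j, n−j)}·‖u‖ for every u ∈ ℝ^d and every j, and ‖A(fʲ(x))u‖_{j+1} ≤ e^{λ₁+δ}‖u‖_j for every u ∈ ℝ^d and j = 0,…,n−1. Then there is a constant c > 0 depending only on C₁, C₂, N, θ, α, δ and λ₁ (and not on n, x, p, ρ) such that ‖A^{n−1,…,0}(p)u‖_n ≤ c·e^{ρ^α}·e^{(λ₁+δ)n}‖u‖₀ for all u, and consequently ‖A(f^{n−1}(p))⋯A(p)‖ ≤ c·N·e^{ρ^α}·e^{(λ₁+δ)n}, where A^{n−1,…,0}(p) = A(f^{n−1}(p))⋯A(f(p))A(p) and ‖·‖ is the operator norm with respect to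 the Euclidean norm. -/

import Mathlib

open Filter Topology

universe u

/-- Operator norm (w.r.t. the Euclidean norm) of a square real matrix. -/
noncomputable def matNorm {m : Type*} [Fintype m] [DecidableEq m] (B : Matrix m m ℝ) : ℝ :=
  ‖LinearMap.toContinuousLinearMap (Matrix.toEuclideanLin B)‖

/-- The cocycle generated by `A` over `f`: `Aⁿ(x) = A(f^{n-1}x) ⋯ A(f x) A(x)`. -/
def cocycle {M : Type u} {m : Type*} [Fintype m] [DecidableEq m]
    (f : M → M) (A : M → Matrix m m ℝ) : ℕ → M → Matrix m m ℝ
  | 0, _ => 1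
  | n + 1, x => cocycle f A n (f x) * A x

/-!
Write `A(fʲp) = A(fʲx) + Eⱼ` and `mⱼ = min(j, n - j)`. Shadowing and Hölder continuity give
`‖Eⱼ‖ ≤ C₂ (C₁ρ)^α e^{-θα mⱼ}`, and passing from the Euclidean norm to `‖·‖_{j+1}` costs at
most `N e^{δ(mⱼ + 1)}`, so in the Lyapunov norms the `j`-th step along the orbit of `p` expands
by at most `e^{λ₁+δ} (1 + K ρ^α e^{-(θα-δ) mⱼ})` with `K = N e^δ C₂ C₁^α / e^{λ₁+δ}`.
As `δ < θα`, the square roots of these errors are summable uniformly in `n`, with sum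
`≤ S √(Kρ^α)`; then `1 + y ≤ e^{2√y}` and `2 S √(Kρ^α) ≤ S²K + ρ^α` bound the product of the
factors by `e^{S²K} e^{ρ^α}`.
-/

open Finset Real Matrix

section MatrixNorm

variable {m : Type*} [Fintype m] [DecidableEq m]

lemma matNorm_nonneg (B : Matrix m m ℝ) : 0 ≤ matNorm B :=
  norm_nonneg _

lemma norm_toEuclideanLin_apply_le (B : Matrix m m ℝ) (v : EuclideanSpace ℝ m) :
    ‖toEuclideanLin B v‖ ≤ matNorm B * ‖v‖ :=
  (LinearMap.toContinuousLinearMap (toEuclideanLin B)).le_opNorm v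

lemma matNorm_le_of_seminorm_le (N₀ N₁ : Seminorm ℝ (EuclideanSpace ℝ m)) (B : Matrix m m ℝ)
    {C L : ℝ} (hC : 0 ≤ C) (hL : 0 ≤ L) (h₀ : ∀ u, N₀ u ≤ L * ‖u‖) (h₁ : ∀ w, ‖w‖ ≤ N₁ w)
    (hB : ∀ u, N₁ (toEuclideanLin B u) ≤ C * N₀ u) :
    matNorm B ≤ C * L :=
  ContinuousLinearMap.opNorm_le_bound _ (mul_nonneg hC hL) fun u =>
    calc ‖toEuclideanLin B u‖ ≤ N₁ (toEuclideanLin B u) := h₁ _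
      _ ≤ C * N₀ u := hB u
      _ ≤ C * (L * ‖u‖) := mul_le_mul_of_nonneg_left (h₀ u) hC
      _ = C * L * ‖u‖ := (mul_assoc _ _ _).symm

lemma seminorm_toEuclideanLin_le_add_matNorm_sub (N₀ N₁ : Seminorm ℝ (EuclideanSpace ℝ m))
    (B B' : Matrix m m ℝ) {a L : ℝ} (hL : 0 ≤ L) (h₀ : ∀ u, ‖u‖ ≤ N₀ u)
    (h₁ : ∀ w, N₁ w ≤ L * ‖w‖) (hB : ∀ u, N₁ (toEuclideanLin B u) ≤ a * N₀ u)
    (v : EuclideanSpace ℝ m) :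
    N₁ (toEuclideanLin B' v) ≤ (a + L * matNorm (B' - B)) * N₀ v := by
  have hsplit : toEuclideanLin B' v = toEuclideanLin B v + toEuclideanLin (B' - B) v := by
    simp
  have herr : N₁ (toEuclideanLin (B' - B) v) ≤ L * matNorm (B' - B) * N₀ v :=
    calc N₁ (toEuclideanLin (B' - B) v) ≤ L * ‖toEuclideanLin (B' - B) v‖ := h₁ _
      _ ≤ L * (matNorm (B' - B) * N₀ v) := by
        gcongr
        exact (norm_toEuclideanLin_apply_le _ v).trans
          (mul_le_mul_of_nonneg_left (h₀ v) (matNorm_nonneg _))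
      _ = L * matNorm (B' - B) * N₀ v := (mul_assoc _ _ _).symm
  calc N₁ (toEuclideanLin B' v)
      ≤ N₁ (toEuclideanLin B v) + N₁ (toEuclideanLin (B' - B) v) := by
        rw [hsplit]; exact map_add_le_add _ _ _
    _ ≤ a * N₀ v + L * matNorm (B' - B) * N₀ v := add_le_add (hB v) herr
    _ = (a + L * matNorm (B' - B)) * N₀ v := by ring

lemma seminorm_toEuclideanLin_le_of_shadowing {M : Type*} [PseudoMetricSpace M]
    (A : M → Matrix m m ℝ) {C₁ C₂ N θ α δ ρ a s : ℝ} (hC₁ : 0 ≤ C₁) (hC₂ : 0 ≤ C₂)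
    (hN : 0 ≤ N) (hα : 0 ≤ α) (hρ : 0 ≤ ρ) (hA : ∀ x y, matNorm (A x - A y) ≤ C₂ * dist x y ^ α)
    {y z : M} (hyz : dist y z ≤ C₁ * ρ * exp (-θ * s))
    (N₀ N₁ : Seminorm ℝ (EuclideanSpace ℝ m)) (h₀ : ∀ u, ‖u‖ ≤ N₀ u)
    (h₁ : ∀ w, N₁ w ≤ N * exp δ * exp (δ * s) * ‖w‖)
    (hy : ∀ u, N₁ (toEuclideanLin (A y) u) ≤ a * N₀ u) (v : EuclideanSpace ℝ m) :
    N₁ (toEuclideanLin (A z) v) ≤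
      (a + N * exp δ * C₂ * C₁ ^ α * ρ ^ α * exp (-(θ * α - δ) * s)) * N₀ v := by
  have hholder : matNorm (A z - A y) ≤ C₂ * (C₁ ^ α * ρ ^ α * exp (-(θ * α) * s)) :=
    calc matNorm (A z - A y) ≤ C₂ * dist z y ^ α := hA z y
      _ ≤ C₂ * (C₁ * ρ * exp (-θ * s)) ^ α := by gcongr; rwa [dist_comm]
      _ = C₂ * (C₁ ^ α * ρ ^ α * exp (-(θ * α) * s)) := by
        rw [mul_rpow (by positivity) (exp_pos _).le, mul_rpow hC₁ hρ, ← exp_mul]; ring_nf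
  have hrate : exp (-(θ * α - δ) * s) = exp (δ * s) * exp (-(θ * α) * s) := by
    rw [← exp_add]; ring_nf
  calc N₁ (toEuclideanLin (A z) v)
      ≤ (a + N * exp δ * exp (δ * s) * matNorm (A z - A y)) * N₀ v :=
        seminorm_toEuclideanLin_le_add_matNorm_sub N₀ N₁ _ _ (by positivity) h₀ h₁ hy v
    _ ≤ (a + N * exp δ * exp (δ * s) * (C₂ * (C₁ ^ α * ρ ^ α * exp (-(θ * α) * s)))) * N₀ v := by
        gcongr
    _ = (a + N * exp δ * C₂ * C₁ ^ α * ρ ^ α * exp (-(θ * α - δ) * s)) * N₀ v := by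
        rw [hrate]; ring

end MatrixNorm

section Cocycle

variable {M : Type*} {m : Type*} [Fintype m] [DecidableEq m] (f : M → M) (A : M → Matrix m m ℝ)

lemma cocycle_succ_eq_mul (n : ℕ) (x : M) :
    cocycle f A (n + 1) x = A (f^[n] x) * cocycle f A n x := by
  induction n generalizing x with
  | zero => simp [cocycle]
  | succ n ih =>
    rw [cocycle, ih, Function.iterate_succ_apply, mul_assoc]
    rfl

lemma seminorm_cocycle_le_prod (Nj : ℕ → Seminorm ℝ (EuclideanSpace ℝ m)) {c : ℕ → ℝ}
    {n : ℕ} {p : M} (hc : ∀ j < n, 0 ≤ c j)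
    (hstep : ∀ j < n, ∀ v, Nj (j + 1) (toEuclideanLin (A (f^[j] p)) v) ≤ c j * Nj j v)
    (u : EuclideanSpace ℝ m) :
    Nj n (toEuclideanLin (cocycle f A n p) u) ≤ (∏ j ∈ range n, c j) * Nj 0 u := by
  induction n with
  | zero => simp [cocycle]
  | succ n ih =>
    have ih := ih (fun j hj => hc j (by omega)) (fun j hj => hstep j (by omega))
    calc Nj (n + 1) (toEuclideanLin (cocycle f A (n + 1) p) u)
        ≤ c n * Nj n (toEuclideanLin (cocycle f A n p) u) := by
          rw [cocycle_succ_eq_mul, toLpLin_mul_same, LinearMap.comp_apply]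
          exact hstep n n.lt_succ_self _
      _ ≤ c n * ((∏ j ∈ range n, c j) * Nj 0 u) :=
          mul_le_mul_of_nonneg_left ih (hc n n.lt_succ_self)
      _ = (∏ j ∈ range (n + 1), c j) * Nj 0 u := by rw [prod_range_succ]; ring

end Cocycle

lemma one_add_le_exp_two_mul_sqrt {x : ℝ} (hx : 0 ≤ x) : 1 + x ≤ exp (2 * √x) :=
  calc 1 + x ≤ (1 + √x) ^ 2 := by nlinarith [sq_sqrt hx, sqrt_nonneg x]
    _ ≤ exp √x ^ 2 := by gcongr; linarith [add_one_le_exp √x]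
    _ = exp (2 * √x) := by rw [← exp_nat_mul]; norm_num

lemma prod_add_mul_le_exp_mul_pow {ι : Type*} (s : Finset ι) (y : ι → ℝ) {a K t S : ℝ}
    (ha : 0 < a) (hK : 0 ≤ K) (ht : 0 ≤ t) (hy : ∀ j ∈ s, 0 ≤ y j)
    (hS : ∑ j ∈ s, √(y j) ≤ S) :
    ∏ j ∈ s, (a + K * t * y j) ≤ exp (S ^ 2 * K / a) * exp t * a ^ #s := by
  have hfactor : ∀ j ∈ s, a + K * t * y j = a * (1 + K / a * t * y j) := by
    intro j _; field_simp
  have hKa : 0 ≤ K / a := div_nonneg hK ha.le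
  have hamgm : 2 * √(K / a * t) * S ≤ S ^ 2 * K / a + t := by
    have hSK : S ^ 2 * K / a = (S * √(K / a)) ^ 2 := by rw [mul_pow, sq_sqrt hKa]; ring
    rw [sqrt_mul hKa, hSK]
    nlinarith [sq_nonneg (S * √(K / a) - √t), sq_sqrt ht]
  calc ∏ j ∈ s, (a + K * t * y j)
      = (∏ j ∈ s, (1 + K / a * t * y j)) * a ^ #s := by
        rw [prod_congr rfl hfactor, prod_mul_distrib, prod_const, mul_comm]
    _ ≤ (∏ j ∈ s, exp (2 * √(K / a * t) * √(y j))) * a ^ #s := by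
        gcongr with j hj
        · intro i hi; have := hy i hi; positivity
        · have hx : 0 ≤ K / a * t * y j := by have := hy j hj; positivity
          calc _ = 1 + K / a * t * y j := by ring
            _ ≤ exp (2 * √(K / a * t * y j)) := one_add_le_exp_two_mul_sqrt hx
            _ = _ := by rw [sqrt_mul (by positivity), mul_assoc]
    _ ≤ exp (S ^ 2 * K / a + t) * a ^ #s := by
        rw [← exp_sum, ← mul_sum]
        gcongr
        exact (mul_le_mul_of_nonneg_left hS (by positivity)).trans hamgm
    _ = exp (S ^ 2 * K / a) * exp t * a ^ #s := by rw [exp_add]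

lemma sum_exp_neg_mul_min_le {γ : ℝ} (hγ : 0 < γ) (n : ℕ) :
    ∑ j ∈ range n, exp (-γ * min (j : ℝ) (n - j)) ≤ 2 / (1 - exp (-γ)) := by
  have hgeom : ∑ j ∈ range n, exp (-γ) ^ j ≤ 1 / (1 - exp (-γ)) := by
    have := geom_sum_Ico_le_of_lt_one (m := 0) (n := n) (exp_pos (-γ)).le
      (exp_lt_one_iff.mpr (by linarith))
    rwa [← range_eq_Ico, pow_zero] at this
  have hpow (k : ℕ) : exp (-γ) ^ k = exp (-γ * k) := by rw [← exp_nat_mul, mul_comm]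
  have hterm : ∀ j ∈ range n,
      exp (-γ * min (j : ℝ) (n - j)) ≤ exp (-γ) ^ j + exp (-γ) ^ (n - 1 - j) := by
    intro j hj
    have hcast : ((n - 1 - j : ℕ) : ℝ) = n - 1 - j := by
      rw [Nat.sub_sub, Nat.cast_sub (by simpa [add_comm] using hj)]; push_cast; ring
    rw [hpow, hpow, hcast]
    rcases min_choice (j : ℝ) (n - j) with h | h <;> rw [h]
    · linarith [exp_pos (-γ * (n - 1 - j))]
    · have : exp (-γ * (n - j)) ≤ exp (-γ * (n - 1 - j)) := exp_le_exp.mpr (by nlinarith)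
      linarith [exp_pos (-γ * j)]
  calc ∑ j ∈ range n, exp (-γ * min (j : ℝ) (n - j))
      ≤ ∑ j ∈ range n, exp (-γ) ^ j + ∑ j ∈ range n, exp (-γ) ^ (n - 1 - j) := by
        rw [← sum_add_distrib]; exact sum_le_sum hterm
    _ ≤ 1 / (1 - exp (-γ)) + 1 / (1 - exp (-γ)) := by
        rw [sum_range_reflect (exp (-γ) ^ ·)]
        exact add_le_add hgeom hgeom
    _ = 2 / (1 - exp (-γ)) := by ring

lemma exp_mul_min_succ_le {δ : ℝ} (hδ : 0 ≤ δ) (n k : ℕ) :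
    exp (δ * min ((k + 1 : ℕ) : ℝ) (n - (k + 1 : ℕ))) ≤ exp δ * exp (δ * min (k : ℝ) (n - k)) := by
  rw [← exp_add]
  gcongr
  have : min ((k + 1 : ℕ) : ℝ) (n - (k + 1 : ℕ)) ≤ min (k : ℝ) (n - k) + 1 := by
    rw [← min_add_add_right]; push_cast
    exact min_le_min le_rfl (by linarith)
  nlinarith

lemma prod_add_mul_exp_neg_mul_min_le {a K t β : ℝ} (ha : 0 < a) (hK : 0 ≤ K) (ht : 0 ≤ t)
    (hβ : 0 < β) (n : ℕ) :
    ∏ j ∈ range n, (a + K * t * exp (-β * min (j : ℝ) (n - j))) ≤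
      exp ((2 / (1 - exp (-(β / 2)))) ^ 2 * K / a) * exp t * a ^ n := by
  have hsqrt : ∑ j ∈ range n, √(exp (-β * min (j : ℝ) (n - j))) ≤ 2 / (1 - exp (-(β / 2))) := by
    simp_rw [← exp_half]
    convert sum_exp_neg_mul_min_le (half_pos hβ) n using 3
    ring
  simpa using prod_add_mul_le_exp_mul_pow _ _ ha hK ht (fun _ _ => (exp_pos _).le) hsqrt

theorem upper_bound_along_shadowing_orbit_general
    {d : ℕ} (C₁ C₂ N θ α δ lam₁ : ℝ)
    (hC₁ : 0 < C₁) (hC₂ : 0 < C₂) (hN : 1 ≤ N) (hα : 0 < α)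
    (hδ₀ : 0 < δ) (hδ : δ < θ * α) :
    ∃ c : ℝ, 0 < c ∧
      ∀ (M : Type u) [MetricSpace M] (A : M → Matrix (Fin d) (Fin d) ℝ),
        (∀ x y : M, matNorm (A x - A y) ≤ C₂ * dist x y ^ α) →
        ∀ (f : M → M) (x p : M) (n : ℕ) (ρ : ℝ), 0 < ρ →
        (∀ j ≤ n, dist (f^[j] x) (f^[j] p) ≤
          C₁ * ρ * Real.exp (-θ * min (j : ℝ) ((n : ℝ) - (j : ℝ)))) →
        ∀ Nj : ℕ → Seminorm ℝ (EuclideanSpace ℝ (Fin d)),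
        (∀ j ≤ n, ∀ u : EuclideanSpace ℝ (Fin d),
          ‖u‖ ≤ Nj j u ∧ Nj j u ≤ N * Real.exp (δ * min (j : ℝ) ((n : ℝ) - (j : ℝ))) * ‖u‖) →
        (∀ j < n, ∀ u : EuclideanSpace ℝ (Fin d),
          Nj (j + 1) (Matrix.toEuclideanLin (A (f^[j] x)) u) ≤ Real.exp (lam₁ + δ) * Nj j u) →
        (∀ u : EuclideanSpace ℝ (Fin d),
          Nj n (Matrix.toEuclideanLin (cocycle f A n p) u) ≤
            c * Real.exp (ρ ^ α) * Real.exp ((lam₁ + δ) * n) * Nj 0 u) ∧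
        matNorm (cocycle f A n p) ≤ c * N * Real.exp (ρ ^ α) * Real.exp ((lam₁ + δ) * n) := by
  set a := exp (lam₁ + δ)
  set K := N * exp δ * C₂ * C₁ ^ α
  set S := 2 / (1 - exp (-((θ * α - δ) / 2)))
  refine ⟨exp (S ^ 2 * K / a), exp_pos _, ?_⟩
  intro M _ A hA f x p n ρ hρ hshadow Nj hNj hx
  have hstep : ∀ j < n, ∀ v, Nj (j + 1) (toEuclideanLin (A (f^[j] p)) v) ≤
      (a + K * ρ ^ α * exp (-(θ * α - δ) * min (j : ℝ) (n - j))) * Nj j v := fun j hj =>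
    seminorm_toEuclideanLin_le_of_shadowing A hC₁.le hC₂.le (by linarith) hα.le hρ.le hA
      (hshadow j hj.le) _ _ (fun u => (hNj j hj.le u).1)
      (fun w => (hNj (j + 1) hj w).2.trans <| by
        rw [mul_assoc N (exp δ)]; gcongr N * ?_ * ‖w‖; exact exp_mul_min_succ_le hδ₀.le n j)
      (hx j hj)
  have hprod : ∏ j ∈ range n, (a + K * ρ ^ α * exp (-(θ * α - δ) * min (j : ℝ) (n - j))) ≤
      exp (S ^ 2 * K / a) * exp (ρ ^ α) * exp ((lam₁ + δ) * n) := by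
    rw [mul_comm (lam₁ + δ), exp_nat_mul]
    exact prod_add_mul_exp_neg_mul_min_le (exp_pos _) (by positivity) (by positivity)
      (by linarith) n
  have hfirst : ∀ u, Nj n (toEuclideanLin (cocycle f A n p) u) ≤
      exp (S ^ 2 * K / a) * exp (ρ ^ α) * exp ((lam₁ + δ) * n) * Nj 0 u := fun u =>
    (seminorm_cocycle_le_prod f A Nj (fun _ _ => by positivity) hstep u).trans
      (mul_le_mul_of_nonneg_right hprod (apply_nonneg _ _))
  refine ⟨hfirst, ?_⟩
  have h₀ : ∀ u, Nj 0 u ≤ N * ‖u‖ := fun u => by simpa using (hNj 0 n.zero_le u).2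
  calc matNorm (cocycle f A n p)
      ≤ exp (S ^ 2 * K / a) * exp (ρ ^ α) * exp ((lam₁ + δ) * n) * N :=
        matNorm_le_of_seminorm_le (Nj 0) (Nj n) _ (by positivity) (by linarith) h₀
          (fun w => (hNj n le_rfl w).1) hfirst
    _ = exp (S ^ 2 * K / a) * N * exp (ρ ^ α) * exp ((lam₁ + δ) * n) := by ring

/-- **Upper bound along a shadowing periodic orbit.** There is a constant `c > 0`, depending
only on `C₁, C₂, N, θ, α, δ, λ₁` (and not on `M`, `f`, `A`, `n`, `x`, `p`, `ρ` or the norms),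
such that whenever the orbit of `p` shadows the orbit of `x` as in the Anosov Closing property
(`d(fʲx, fʲp) ≤ C₁ ρ e^{-θ min(j, n-j)}` for `j = 0, …, n`), `A` is `α`-Hölder with constant
`C₂`, and `‖·‖₀, …, ‖·‖_n` are norms with `‖u‖ ≤ ‖u‖_j ≤ N e^{δ min(j, n-j)} ‖u‖` and
`‖A(fʲx) u‖_{j+1} ≤ e^{λ₁+δ} ‖u‖_j`, then
`‖Aⁿ(p) u‖_n ≤ c e^{ρ^α} e^{(λ₁+δ)n} ‖u‖₀` and `‖Aⁿ(p)‖ ≤ c N e^{ρ^α} e^{(λ₁+δ)n}`. -/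
theorem upper_bound_along_shadowing_orbit
    {d : ℕ} (C₁ C₂ N θ α δ lam₁ : ℝ)
    (hC₁ : 0 < C₁) (hC₂ : 0 < C₂) (hN : 1 ≤ N) (hθ : 0 < θ) (hα : 0 < α)
    (hδ₀ : 0 < δ) (hδ : δ < θ * α) :
    ∃ c : ℝ, 0 < c ∧
      ∀ (M : Type u) [MetricSpace M] (A : M → Matrix (Fin d) (Fin d) ℝ),
        (∀ x y : M, matNorm (A x - A y) ≤ C₂ * dist x y ^ α) →
        ∀ (f : M → M) (x p : M) (n : ℕ) (ρ : ℝ), 0 < ρ →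
        (∀ j ≤ n, dist (f^[j] x) (f^[j] p) ≤
          C₁ * ρ * Real.exp (-θ * min (j : ℝ) ((n : ℝ) - (j : ℝ)))) →
        ∀ Nj : ℕ → Seminorm ℝ (EuclideanSpace ℝ (Fin d)),
        (∀ j ≤ n, ∀ u : EuclideanSpace ℝ (Fin d),
          ‖u‖ ≤ Nj j u ∧ Nj j u ≤ N * Real.exp (δ * min (j : ℝ) ((n : ℝ) - (j : ℝ))) * ‖u‖) →
        (∀ j < n, ∀ u : EuclideanSpace ℝ (Fin d),
          Nj (j + 1) (Matrix.toEuclideanLin (A (f^[j] x)) u) ≤ Real.exp (lam₁ + δ) * Nj j u) →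
        (∀ u : EuclideanSpace ℝ (Fin d),
          Nj n (Matrix.toEuclideanLin (cocycle f A n p) u) ≤
            c * Real.exp (ρ ^ α) * Real.exp ((lam₁ + δ) * n) * Nj 0 u) ∧
        matNorm (cocycle f A n p) ≤ c * N * Real.exp (ρ ^ α) * Real.exp ((lam₁ + δ) * n) :=
  upper_bound_along_shadowing_orbit_general C₁ C₂ N θ α δ lam₁ hC₁ hC₂ hN hα hδ₀ hδ
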